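/- arXiv:1905.01148 — 3 statements merged into one kernel-verified Lean document; each statement's English description precedes it below -/
import Mathlib

section
/- Let 𝒜 be an abelian length category and [𝒰, 𝒯] a wide interval in tors 𝒜 with 𝒲 := 𝒰^⊥ ∩ 𝒯. Then the set of simple objects of the abelian category 𝒲 coincides with the set of brick labels of Hasse arrows of the interval [𝒰, 𝒯] starting at 𝒯, and also with the set of brick labels of Hasse arrows of [𝒰, 𝒯] ending at 𝒰. -/
open CategoryTheory CategoryTheory.Limits

universe v u

attribute [local instance] CategoryTheory.Abelian.hasFiniteBiproducts

variable (C : Type u) [Category.{v} C] [Abelian C]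

/-- The right Hom-perpendicular category of a class of objects. -/
def RPerp (X : Set C) : Set C := {Y | ∀ A ∈ X, ∀ f : A ⟶ Y, f = 0}

/-- The left Hom-perpendicular category of a class of objects. -/
def LPerp (X : Set C) : Set C := {Y | ∀ A ∈ X, ∀ f : Y ⟶ A, f = 0}

/-- A torsion class: a class of objects containing the zero objects and closed under
quotients and extensions. -/
structure IsTorsionClass (T : Set C) : Prop where
  zero_mem : ∀ Z : C, IsZero Z → Z ∈ T
  quot_mem : ∀ ⦃A B : C⦄ (f : A ⟶ B), Epi f → A ∈ T → B ∈ T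
  ext_mem : ∀ E : ShortComplex C, E.ShortExact → E.X₁ ∈ T → E.X₃ ∈ T → E.X₂ ∈ T

/-- A torsion-free class: a class of objects containing the zero objects and closed under
subobjects and extensions. -/
structure IsTorsionFreeClass (F : Set C) : Prop where
  zero_mem : ∀ Z : C, IsZero Z → Z ∈ F
  sub_mem : ∀ ⦃A B : C⦄ (f : A ⟶ B), Mono f → B ∈ F → A ∈ F
  ext_mem : ∀ E : ShortComplex C, E.ShortExact → E.X₁ ∈ F → E.X₃ ∈ F → E.X₂ ∈ F

/-- The smallest torsion class containing a class of objects. -/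
def torsClosure (X : Set C) : Set C := ⋂₀ {T | IsTorsionClass C T ∧ X ⊆ T}

/-- The smallest torsion-free class containing a class of objects. -/
def torfClosure (X : Set C) : Set C := ⋂₀ {F | IsTorsionFreeClass C F ∧ X ⊆ F}

/-- `ExtStar U W` is the class of objects `X` admitting a short exact sequence
`0 → U' → X → W' → 0` with `U' ∈ U` and `W' ∈ W`. -/
def ExtStar (U W : Set C) : Set C :=
  {X | ∃ E : ShortComplex C, E.ShortExact ∧ E.X₁ ∈ U ∧ E.X₃ ∈ W ∧ Nonempty (E.X₂ ≅ X)}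

/-- The additive closure of a class of objects: direct summands of finite direct sums. -/
def AddClosure (S : Set C) : Set C :=
  {X | ∃ (n : ℕ) (c : Fin n → C), (∀ i, c i ∈ S) ∧ ∃ f : (⨁ c) ⟶ X, IsSplitEpi f}

/-- Membership in the filtration closure `Filt S`: objects admitting a finite filtration
with subquotients in `AddClosure S`. -/
inductive FiltMem (S : Set C) : C → Prop
  | of_isZero (X : C) : IsZero X → FiltMem S X
  | ext (E : ShortComplex C) : E.ShortExact → FiltMem S E.X₁ →
      E.X₃ ∈ AddClosure C S → FiltMem S E.X₂
  | of_iso (X Y : C) (e : X ≅ Y) : FiltMem S X → FiltMem S Y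

/-- The filtration closure of a class of objects. -/
def Filt (S : Set C) : Set C := {X | FiltMem C S X}

/-- The class of quotients of objects of the additive closure of `S`. -/
def Fac (S : Set C) : Set C := {X | ∃ A ∈ AddClosure C S, ∃ f : A ⟶ X, Epi f}

/-- The class of subobjects of objects of the additive closure of `S`. -/
def Subm (S : Set C) : Set C := {X | ∃ A ∈ AddClosure C S, ∃ f : X ⟶ A, Mono f}

/-- A wide subcategory: closed under kernels, cokernels and extensions
(and containing the zero objects). -/
structure IsWide (W : Set C) : Prop where
  zero_mem : ∀ Z : C, IsZero Z → Z ∈ W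
  ker_mem : ∀ ⦃X Y : C⦄ (f : X ⟶ Y), X ∈ W → Y ∈ W → kernel f ∈ W
  coker_mem : ∀ ⦃X Y : C⦄ (f : X ⟶ Y), X ∈ W → Y ∈ W → cokernel f ∈ W
  ext_mem : ∀ E : ShortComplex C, E.ShortExact → E.X₁ ∈ W → E.X₃ ∈ W → E.X₂ ∈ W

/-- A brick: a nonzero object all of whose nonzero endomorphisms are invertible
(equivalently, the endomorphism ring is a division ring). -/
def IsBrick (S : C) : Prop := ¬ IsZero S ∧ ∀ f : S ⟶ S, f = 0 ∨ IsIso f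

/-- A simple object of the full abelian subcategory determined by a wide subcategory `W`. -/
def IsSimpleIn (W : Set C) (S : C) : Prop :=
  S ∈ W ∧ ¬ IsZero S ∧ ∀ ⦃A : C⦄ (f : A ⟶ S), A ∈ W → Mono f → IsZero A ∨ IsIso f

/-- A Hasse arrow `T → U` in the poset of torsion classes: `U ⊊ T` are adjacent. -/
def IsHasseArrow (T U : Set C) : Prop :=
  IsTorsionClass C T ∧ IsTorsionClass C U ∧ U ⊂ T ∧
    ∀ V : Set C, IsTorsionClass C V → U ⊆ V → V ⊆ T → V = U ∨ V = T

/-- A Hasse arrow `F → G` in the poset of torsion-free classes: `G ⊊ F` are adjacent. -/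
def IsHasseArrowTorf (F G : Set C) : Prop :=
  IsTorsionFreeClass C F ∧ IsTorsionFreeClass C G ∧ G ⊂ F ∧
    ∀ H : Set C, IsTorsionFreeClass C H → G ⊆ H → H ⊆ F → H = G ∨ H = F

/-- The brick label of a Hasse arrow `T → U` of torsion classes:
the unique brick in `U^⊥ ∩ T`. -/
def IsBrickLabel (T U : Set C) (S : C) : Prop := IsBrick C S ∧ S ∈ RPerp C U ∩ T

/-- The brick label of a Hasse arrow `F → G` of torsion-free classes:
the unique brick in `^⊥G ∩ F`. -/
def IsBrickLabelTorf (F G : Set C) (S : C) : Prop := IsBrick C S ∧ S ∈ LPerp C G ∩ F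

/-- The left wide subcategory of a torsion class. -/
def WL (T : Set C) : Set C :=
  {X | X ∈ T ∧ ∀ ⦃Y : C⦄ (g : Y ⟶ X), Y ∈ T → kernel g ∈ T}

/-- The right wide subcategory of a torsion-free class. -/
def WR (F : Set C) : Set C :=
  {X | X ∈ F ∧ ∀ ⦃Y : C⦄ (f : X ⟶ Y), Y ∈ F → cokernel f ∈ F}

/-- A Serre subcategory of the abelian category given by a wide subcategory `W`:
closed under extensions, subobjects and quotients within `W`. -/
structure IsSerreIn (W S : Set C) : Prop where
  subset : S ⊆ W
  zero_mem : ∀ Z : C, IsZero Z → Z ∈ S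
  sub_mem : ∀ ⦃A X : C⦄ (f : A ⟶ X), Mono f → A ∈ W → X ∈ S → A ∈ S
  quot_mem : ∀ ⦃X B : C⦄ (f : X ⟶ B), Epi f → B ∈ W → X ∈ S → B ∈ S
  ext_mem : ∀ E : ShortComplex C, E.ShortExact → E.X₂ ∈ W →
    E.X₁ ∈ S → E.X₃ ∈ S → E.X₂ ∈ S

/-- A torsion class of the abelian category given by a wide subcategory `W`:
a subclass of `W` containing the zero objects and closed under quotients in `W`
and extensions. -/
structure IsTorsionClassIn (W X : Set C) : Prop where
  subset : X ⊆ W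
  zero_mem : ∀ Z : C, IsZero Z → Z ∈ X
  quot_mem : ∀ ⦃A B : C⦄ (f : A ⟶ B), Epi f → A ∈ X → B ∈ W → B ∈ X
  ext_mem : ∀ E : ShortComplex C, E.ShortExact → E.X₁ ∈ X → E.X₃ ∈ X → E.X₂ ∈ X

/-
For `S` simple in `W`, the relevant arrows are `T → T ∩ ⊥S` and `⊥((U ∪ {S})^⊥) → U`, both
labelled by `S`.  Adjacency rests on two facts about `W = U^⊥ ∩ T`: by Artinian induction, every
object of `W` is an iterated extension of copies of `S` and objects of `T ∩ ⊥S`; and by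
Noetherianity, every nonzero object of `W` has a simple quotient in `W`, which is isomorphic to `S`
as soon as `S` maps to it nonzero (Schur's lemma in `W`).  Conversely, if `S` labels an arrow at the
top (resp. bottom) of the interval, a proper subobject `A` (resp. quotient `Q`) of `S` in `W`
yields the intermediate torsion class `T ∩ ⊥A` (resp. `V ∩ ⊥((U ∪ {Q})^⊥)`), and adjacency
together with the brick property forces `A = 0` (resp. `Q = 0`).
-/

variable {C}

section ClosureProperties

lemma isZero_of_mem_of_mem_rperp {X : Set C} {A : C} (hA : A ∈ X) (hA' : A ∈ RPerp C X) :
    IsZero A :=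
  (IsZero.iff_id_eq_zero A).2 (hA' A hA (𝟙 A))

lemma isZero_of_mem_of_mem_lperp {X : Set C} {A : C} (hA : A ∈ X) (hA' : A ∈ LPerp C X) :
    IsZero A :=
  (IsZero.iff_id_eq_zero A).2 (hA' A hA (𝟙 A))

lemma IsTorsionClass.mem_of_iso {T : Set C} (hT : IsTorsionClass C T) {A B : C} (e : A ≅ B)
    (hA : A ∈ T) : B ∈ T :=
  hT.quot_mem e.hom inferInstance hA

lemma IsTorsionClass.mem_of_cokernel_mem {T : Set C} (hT : IsTorsionClass C T) {M : C}
    (t : Subobject M) (ht : (t : C) ∈ T) (hc : cokernel t.arrow ∈ T) : M ∈ T :=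
  hT.ext_mem _ { exact := ShortComplex.exact_cokernel t.arrow } ht hc

lemma IsTorsionClass.inter {T₁ T₂ : Set C} (h₁ : IsTorsionClass C T₁)
    (h₂ : IsTorsionClass C T₂) : IsTorsionClass C (T₁ ∩ T₂) where
  zero_mem Z hZ := ⟨h₁.zero_mem Z hZ, h₂.zero_mem Z hZ⟩
  quot_mem _ _ f hf hA := ⟨h₁.quot_mem f hf hA.1, h₂.quot_mem f hf hA.2⟩
  ext_mem E hE hE₁ hE₃ := ⟨h₁.ext_mem E hE hE₁.1 hE₃.1, h₂.ext_mem E hE hE₁.2 hE₃.2⟩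

lemma isTorsionClass_lperp (G : Set C) : IsTorsionClass C (LPerp C G) where
  zero_mem Z hZ _ _ f := hZ.eq_of_src f 0
  quot_mem _ _ f _ hA Y hY g := (cancel_epi f).1 (by rw [comp_zero]; exact hA Y hY (f ≫ g))
  ext_mem E hE h₁ h₃ Y hY g := by
    obtain ⟨d, hd⟩ := CokernelCofork.IsColimit.desc' hE.gIsCokernel g (h₁ Y hY _)
    rw [← hd, h₃ Y hY d, comp_zero]

open ZeroObject in
lemma IsWide.mem_of_iso {W : Set C} (hW : IsWide C W) {A B : C} (e : A ≅ B) (hA : A ∈ W) :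
    B ∈ W :=
  hW.ext_mem (ShortComplex.mk e.hom (0 : B ⟶ 0) comp_zero)
    { exact := (ShortComplex.exact_iff_epi _ rfl).2 inferInstance } hA
    (hW.zero_mem _ (isZero_zero C))

end ClosureProperties

section Pullback

variable {K N A : C} (i : K ⟶ N) [Mono i] (m : A ⟶ cokernel i)

lemma shortExact_pullback_cokernel_π :
    (ShortComplex.mk (pullback.lift i 0 (by simp) : K ⟶ pullback (cokernel.π i) m)
      (pullback.snd _ _) (pullback.lift_snd _ _ _)).ShortExact := by
  have hfst : pullback.lift i 0 (by simp) ≫ pullback.fst (cokernel.π i) m = i :=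
    pullback.lift_fst _ _ _
  have : Mono (pullback.lift i 0 (by simp) : K ⟶ pullback (cokernel.π i) m) :=
    mono_of_mono_fac hfst
  refine { exact := ShortComplex.exact_of_f_is_kernel _ ?_ }
  refine KernelFork.IsLimit.ofι' _ (pullback.lift_snd _ _ _) fun {Z} k hk => ?_
  have hk' : (k ≫ pullback.fst _ _) ≫ cokernel.π i = 0 := by
    rw [Category.assoc, pullback.condition, ← Category.assoc, hk, zero_comp]
  refine ⟨Abelian.monoLift i _ hk', pullback.hom_ext ?_ ?_⟩
  · simp only [Category.assoc, pullback.lift_fst, Abelian.monoLift_comp]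
  · simp only [Category.assoc, pullback.lift_snd, comp_zero, hk]

lemma Subobject.mk_lt_mk_pullback_fst [Mono m] (hA : ¬ IsZero A) :
    Subobject.mk i < Subobject.mk (pullback.fst (cokernel.π i) m) := by
  let l : K ⟶ pullback (cokernel.π i) m := pullback.lift i 0 (by simp)
  refine Subobject.mk_lt_mk_of_comm l (pullback.lift_fst _ _ _) fun _ => hA ?_
  exact IsZero.of_epi_eq_zero (pullback.snd (cokernel.π i) m)
    ((cancel_epi l).1 (by rw [pullback.lift_snd, comp_zero]))

end Pullback

lemma IsTorsionClass.exists_subobject_cokernel_mem_rperp {T : Set C} (hT : IsTorsionClass C T)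
    (M : C) [IsNoetherianObject M] :
    ∃ t : Subobject M, (t : C) ∈ T ∧ cokernel t.arrow ∈ RPerp C T := by
  obtain ⟨t, ht, hmax⟩ := (wellFounded_gt (α := Subobject M)).has_min {s | (s : C) ∈ T}
    ⟨⊥, hT.zero_mem _ ((isZero_zero C).of_iso Subobject.botCoeIsoZero)⟩
  refine ⟨t, ht, fun Y hY h => by_contra fun hh => ?_⟩
  have hI : Abelian.image h ∈ T := hT.quot_mem (Abelian.factorThruImage h) inferInstance hY
  have hI0 : ¬ IsZero (Abelian.image h) := fun hz => hh (by
    rw [← Abelian.image.fac h, hz.eq_of_src (Abelian.image.ι h) 0, comp_zero])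
  refine hmax _ ?_ (t.mk_arrow ▸ Subobject.mk_lt_mk_pullback_fst t.arrow (Abelian.image.ι h) hI0)
  exact hT.mem_of_iso (Subobject.underlyingIso _).symm
    (hT.ext_mem _ (shortExact_pullback_cokernel_π _ _) ht hI)

lemma IsTorsionClass.lperp_rperp_subset [Noetherian C] {T Y : Set C} (hT : IsTorsionClass C T)
    (hY : Y ⊆ T) : LPerp C (RPerp C Y) ⊆ T := by
  intro M hM
  obtain ⟨t, ht, hperp⟩ := hT.exists_subobject_cokernel_mem_rperp M
  have hc : IsZero (cokernel t.arrow) :=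
    IsZero.of_epi_eq_zero (cokernel.π t.arrow) (hM _ (fun A hA => hperp A (hY hA)) _)
  exact hT.mem_of_cokernel_mem t ht (hT.zero_mem _ hc)

lemma IsArtinianObject.induction {D : Type*} [Category D] {P : D → Prop}
    (hP : ∀ {A B : D}, (A ≅ B) → P A → P B)
    (step : ∀ N : D, (∀ {K : D} (i : K ⟶ N) [Mono i], ¬ IsIso i → P K) → P N)
    (M : D) [IsArtinianObject M] : P M := by
  suffices ∀ N : Subobject M, P N from hP (asIso (⊤ : Subobject M).arrow) (this ⊤)
  intro N
  induction N using WellFoundedLT.induction with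
  | _ N ih =>
  refine step N fun i _ hi => hP (Subobject.underlyingIso (i ≫ N.arrow)) (ih _ ?_)
  simpa only [Subobject.mk_arrow] using Subobject.mk_lt_mk_of_comm (i₁ := i ≫ N.arrow) i rfl hi

section Simple

variable {W : Set C}

lemma IsSimpleIn.mono_of_ne_zero (hW : IsWide C W) {S Q : C} (hS : IsSimpleIn C W S)
    (hQ : Q ∈ W) (g : S ⟶ Q) (hg : g ≠ 0) : Mono g := by
  rcases hS.2.2 (kernel.ι g) (hW.ker_mem g hS.1 hQ) inferInstance with h | h
  · exact Preadditive.mono_of_isZero_kernel g h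
  · exact absurd ((cancel_epi (kernel.ι g)).1 (by simp)) hg

lemma IsSimpleIn.isIso_of_ne_zero (hW : IsWide C W) {S Q : C} (hS : IsSimpleIn C W S)
    (hQ : IsSimpleIn C W Q) (g : S ⟶ Q) (hg : g ≠ 0) : IsIso g :=
  have := hS.mono_of_ne_zero hW hQ.1 g hg
  (hQ.2.2 g hS.1 inferInstance).resolve_left hS.2.1

lemma IsSimpleIn.isBrick (hW : IsWide C W) {S : C} (hS : IsSimpleIn C W S) : IsBrick C S :=
  ⟨hS.2.1, fun f => or_iff_not_imp_left.2 (hS.isIso_of_ne_zero hW hS f)⟩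

lemma IsWide.exists_epi_isSimpleIn (hW : IsWide C W) {N : C} [IsNoetherianObject N]
    (hN : N ∈ W) (hN0 : ¬ IsZero N) : ∃ (Q : C) (q : N ⟶ Q), Epi q ∧ IsSimpleIn C W Q := by
  have := Subobject.nontrivial_of_not_isZero hN0
  obtain ⟨K, ⟨hKtop, hKW⟩, hmax⟩ := (wellFounded_gt (α := Subobject N)).has_min
    {K | K ≠ ⊤ ∧ (K : C) ∈ W}
    ⟨⊥, bot_ne_top, hW.zero_mem _ ((isZero_zero C).of_iso Subobject.botCoeIsoZero)⟩
  have hQ0 : ¬ IsZero (cokernel K.arrow) := fun hz => hKtop <| (K.isIso_arrow_iff_eq_top).1 <|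
    have := Preadditive.epi_of_isZero_cokernel _ hz
    isIso_of_mono_of_epi _
  refine ⟨_, cokernel.π K.arrow, inferInstance, hW.coker_mem _ hKW hN, hQ0,
    fun A f hA _ => or_iff_not_imp_left.2 fun hA0 => by_contra fun hf => ?_⟩
  refine hmax _ ⟨?_, ?_⟩ (K.mk_arrow ▸ Subobject.mk_lt_mk_pullback_fst K.arrow f hA0)
  · rw [Ne, ← Subobject.isIso_iff_mk_eq_top]
    intro _
    have : Epi (pullback.snd (cokernel.π K.arrow) f ≫ f) := by
      rw [← pullback.condition]; exact epi_comp _ _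
    have := epi_of_epi (pullback.snd (cokernel.π K.arrow) f) f
    exact hf (isIso_of_mono_of_epi f)
  · exact hW.mem_of_iso (Subobject.underlyingIso _).symm
      (hW.ext_mem _ (shortExact_pullback_cokernel_π _ _) hKW hA)

end Simple

section Interval

variable {U T : Set C}

lemma IsSimpleIn.epi_of_ne_zero (hT : IsTorsionClass C T) {S : C}
    (hS : IsSimpleIn C (RPerp C U ∩ T) S) {M : C} (hM : M ∈ T) (g : M ⟶ S) (hg : g ≠ 0) :
    Epi g := by
  have hI : Abelian.image g ∈ RPerp C U ∩ T :=
    ⟨fun A hA f => zero_of_comp_mono (Abelian.image.ι g) (hS.1.1 A hA _),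
      hT.quot_mem (Abelian.factorThruImage g) inferInstance hM⟩
  have hI0 : ¬ IsZero (Abelian.image g) := fun hz => hg (by
    rw [← Abelian.image.fac g, hz.eq_of_src (Abelian.image.ι g) 0, comp_zero])
  have := (hS.2.2 (Abelian.image.ι g) hI inferInstance).resolve_left hI0
  rw [← Abelian.image.fac g]
  exact epi_comp _ _

lemma IsSimpleIn.subset_of_mem_of_inter_lperp_subset [Artinian C] (hT : IsTorsionClass C T)
    (hW : IsWide C (RPerp C U ∩ T)) {S : C} (hS : IsSimpleIn C (RPerp C U ∩ T) S)
    {X : Set C} (hX : IsTorsionClass C X) (hSX : S ∈ X) (hTX : T ∩ LPerp C {S} ⊆ X) :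
    RPerp C U ∩ T ⊆ X := by
  intro M
  refine IsArtinianObject.induction (P := fun N => N ∈ RPerp C U ∩ T → N ∈ X)
    (fun e h hB => hX.mem_of_iso e (h (hW.mem_of_iso e.symm hB))) (fun N ih hN => ?_) M
  by_cases hNS : ∀ g : N ⟶ S, g = 0
  · exact hTX ⟨hN.2, by rintro _ rfl; exact hNS⟩
  push Not at hNS
  obtain ⟨g, hg⟩ := hNS
  have := hS.epi_of_ne_zero hT hN.2 g hg
  have hker : kernel g ∈ X := ih (kernel.ι g)
    (fun _ => hg ((cancel_epi (kernel.ι g)).1 (by simp))) (hW.ker_mem g hN hS.1)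
  exact hX.ext_mem _ { exact := ShortComplex.exact_kernel g } hker hSX

lemma IsSimpleIn.exists_hasseArrow_from_top [Noetherian C] [Artinian C]
    (hT : IsTorsionClass C T) (hUT : U ⊆ T) (hW : IsWide C (RPerp C U ∩ T)) {S : C}
    (hS : IsSimpleIn C (RPerp C U ∩ T) S) :
    ∃ V : Set C, U ⊆ V ∧ V ⊆ T ∧ IsHasseArrow C T V ∧ IsBrickLabel C T V S := by
  have hV : IsTorsionClass C (T ∩ LPerp C {S}) := hT.inter (isTorsionClass_lperp _)
  have hUV : U ⊆ T ∩ LPerp C {S} := fun A hA => ⟨hUT hA, by rintro _ rfl; exact hS.1.1 A hA⟩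
  have hSV : S ∉ T ∩ LPerp C {S} := fun h =>
    hS.2.1 (isZero_of_mem_of_mem_lperp (Set.mem_singleton _) h.2)
  refine ⟨_, hUV, Set.inter_subset_left, ⟨hT, hV,
    Set.inter_subset_left.ssubset_of_not_subset fun h => hSV (h hS.1.2), fun X hX hVX hXT => ?_⟩,
    hS.isBrick hW, fun A hA f => hA.2 S (Set.mem_singleton _) f, hS.1.2⟩
  by_cases hXV : X ⊆ T ∩ LPerp C {S}
  · exact Or.inl (hXV.antisymm hVX)
  obtain ⟨M, hMX, hMV⟩ := Set.not_subset.1 hXV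
  have hMS : ¬ ∀ g : M ⟶ S, g = 0 := fun h => hMV ⟨hXT hMX, by rintro _ rfl; exact h⟩
  push Not at hMS
  obtain ⟨g, hg⟩ := hMS
  have hSX : S ∈ X := hX.quot_mem g (hS.epi_of_ne_zero hT (hXT hMX) g hg) hMX
  refine Or.inr (hXT.antisymm fun M' hM' => ?_)
  obtain ⟨t, ht, hperp⟩ := hV.exists_subobject_cokernel_mem_rperp M'
  have hc : cokernel t.arrow ∈ RPerp C U ∩ T :=
    ⟨fun A hA => hperp A (hUV hA), hT.quot_mem (cokernel.π t.arrow) inferInstance hM'⟩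
  exact hX.mem_of_cokernel_mem t (hVX ht)
    (hS.subset_of_mem_of_inter_lperp_subset hT hW hX hSX hVX hc)

lemma IsBrickLabel.isSimpleIn_of_hasseArrow_from_top {V : Set C} {S : C} (hUV : U ⊆ V)
    (hHA : IsHasseArrow C T V) (hL : IsBrickLabel C T V S) :
    IsSimpleIn C (RPerp C U ∩ T) S := by
  obtain ⟨⟨hS0, hSbrick⟩, hSV, hST⟩ := hL
  refine ⟨⟨fun A hA => hSV A (hUV hA), hST⟩, hS0,
    fun A f hA _ => or_iff_not_imp_left.2 fun hA0 => ?_⟩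
  have hVX : V ⊆ T ∩ LPerp C {A} := fun M hM =>
    ⟨hHA.2.2.1.1 hM, by rintro _ rfl h; exact zero_of_comp_mono f (hSV M hM (h ≫ f))⟩
  rcases hHA.2.2.2 _ (hHA.1.inter (isTorsionClass_lperp _)) hVX Set.inter_subset_left
    with hXV | hXT
  · have hSA : ¬ ∀ h : S ⟶ A, h = 0 := fun hall =>
      hS0 (isZero_of_mem_of_mem_rperp (hXV ▸ ⟨hST, by rintro _ rfl; exact hall⟩) hSV)
    push Not at hSA
    obtain ⟨h, hh⟩ := hSA
    have := (hSbrick (h ≫ f)).resolve_left fun h0 => hh (zero_of_comp_mono f h0)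
    have := epi_of_epi h f
    exact isIso_of_mono_of_epi f
  · have hAX : A ∈ T ∩ LPerp C {A} := by rw [hXT]; exact hA.2
    exact absurd (isZero_of_mem_of_mem_lperp (Set.mem_singleton _) hAX.2) hA0

lemma IsSimpleIn.exists_hasseArrow_to_bot [Noetherian C] (hU : IsTorsionClass C U)
    (hT : IsTorsionClass C T) (hUT : U ⊆ T) (hW : IsWide C (RPerp C U ∩ T)) {S : C}
    (hS : IsSimpleIn C (RPerp C U ∩ T) S) :
    ∃ V : Set C, U ⊆ V ∧ V ⊆ T ∧ IsHasseArrow C V U ∧ IsBrickLabel C V U S := by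
  have hUSV : U ∪ {S} ⊆ LPerp C (RPerp C (U ∪ {S})) := fun A hA _ hB f => hB A hA f
  have hUV := Set.subset_union_left.trans hUSV
  have hSV : S ∈ LPerp C (RPerp C (U ∪ {S})) := hUSV (Or.inr rfl)
  have hUST : U ∪ {S} ⊆ T := Set.union_subset hUT (Set.singleton_subset_iff.2 hS.1.2)
  have hSU : S ∉ U := fun h => hS.2.1 (isZero_of_mem_of_mem_rperp h hS.1.1)
  refine ⟨_, hUV, hT.lperp_rperp_subset hUST, ⟨isTorsionClass_lperp _, hU,
    hUV.ssubset_of_not_subset fun h => hSU (h hSV), fun X hX hUX hXV => ?_⟩,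
    hS.isBrick hW, hS.1.1, hSV⟩
  by_cases hXU : X ⊆ U
  · exact Or.inl (hXU.antisymm hUX)
  refine Or.inr (hXV.antisymm (hX.lperp_rperp_subset (Set.union_subset hUX ?_)))
  obtain ⟨M, hMX, hMU⟩ := Set.not_subset.1 hXU
  obtain ⟨t, ht, hperp⟩ := hU.exists_subobject_cokernel_mem_rperp M
  have hN0 : ¬ IsZero (cokernel t.arrow) := fun hz =>
    hMU (hU.mem_of_cokernel_mem t ht (hU.zero_mem _ hz))
  have hNX : cokernel t.arrow ∈ X := hX.quot_mem (cokernel.π t.arrow) inferInstance hMX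
  obtain ⟨Q, q, _, hQ⟩ :=
    hW.exists_epi_isSimpleIn ⟨hperp, hT.lperp_rperp_subset hUST (hXV hNX)⟩ hN0
  have hQX : Q ∈ X := hX.quot_mem q ‹_› hNX
  have hSQ : ¬ ∀ g : S ⟶ Q, g = 0 := fun hall => hQ.2.1 <|
    isZero_of_mem_of_mem_lperp (by rintro A (hA | rfl); exacts [hQ.1.1 A hA, hall]) (hXV hQX)
  push Not at hSQ
  obtain ⟨g, hg⟩ := hSQ
  have := hS.isIso_of_ne_zero hW hQ g hg
  exact Set.singleton_subset_iff.2 (hX.mem_of_iso (asIso g).symm hQX)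

lemma IsBrickLabel.isSimpleIn_of_hasseArrow_to_bot (hW : IsWide C (RPerp C U ∩ T)) {V : Set C}
    {S : C} (hVT : V ⊆ T) (hHA : IsHasseArrow C V U) (hL : IsBrickLabel C V U S) :
    IsSimpleIn C (RPerp C U ∩ T) S := by
  obtain ⟨⟨hS0, hSbrick⟩, hSU, hSV⟩ := hL
  have hSW : S ∈ RPerp C U ∩ T := ⟨hSU, hVT hSV⟩
  refine ⟨hSW, hS0, fun A f hA _ => ?_⟩
  by_cases hQ0 : IsZero (cokernel f)
  · have := Preadditive.epi_of_isZero_cokernel f hQ0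
    exact Or.inr (isIso_of_mono_of_epi f)
  have hQV : cokernel f ∈ V := hHA.1.quot_mem (cokernel.π f) inferInstance hSV
  have hQU : cokernel f ∉ U := fun h =>
    hQ0 (isZero_of_mem_of_mem_rperp h (hW.coker_mem f hA hSW).1)
  have hUX : U ⊆ V ∩ LPerp C (RPerp C (U ∪ {cokernel f})) := fun B hB =>
    ⟨hHA.2.2.1.1 hB, fun _ hY g => hY B (Or.inl hB) g⟩
  rcases hHA.2.2.2 _ (hHA.1.inter (isTorsionClass_lperp _)) hUX Set.inter_subset_left
    with hXU | hXV
  · exact absurd (hXU ▸ ⟨hQV, fun _ hY g => hY _ (Or.inr rfl) g⟩) hQU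
  -- As `S ≠ 0` lies in `⊥((U ∪ {Q})^⊥)`, some `h : Q ⟶ S` is nonzero; then `π ≫ h` is an
  -- automorphism of the brick `S`, so the cokernel map `π` is mono, i.e. `f = 0`.
  have hQS : ¬ ∀ h : cokernel f ⟶ S, h = 0 := fun hall => hS0 <|
    isZero_of_mem_of_mem_lperp (by rintro B (hB | rfl); exacts [hSU B hB, hall]) (hXV ▸ hSV).2
  push Not at hQS
  obtain ⟨h, hh⟩ := hQS
  have := (hSbrick (cokernel.π f ≫ h)).resolve_left fun h0 =>
    hh ((cancel_epi (cokernel.π f)).1 (by rw [h0, comp_zero]))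
  have := mono_of_mono (cokernel.π f) h
  exact Or.inl (IsZero.of_mono_eq_zero f (zero_of_comp_mono (cokernel.π f) (cokernel.condition f)))

end Interval

/-- For a wide interval `[U,T]` with `W = U^⊥ ∩ T`, the simple objects of `W` are
exactly the labels of Hasse arrows of `[U,T]` starting at `T`, and also exactly the
labels of Hasse arrows of `[U,T]` ending at `U`. -/
theorem stmt_11 [Noetherian C] [Artinian C]
    (U T : Set C) (hU : IsTorsionClass C U) (hT : IsTorsionClass C T) (hUT : U ⊆ T)
    (W : Set C) (hW : W = RPerp C U ∩ T) (hwide : IsWide C W) :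
    ∀ S : C,
      (IsSimpleIn C W S ↔
        ∃ V : Set C, U ⊆ V ∧ V ⊆ T ∧ IsHasseArrow C T V ∧ IsBrickLabel C T V S) ∧
      (IsSimpleIn C W S ↔
        ∃ V : Set C, U ⊆ V ∧ V ⊆ T ∧ IsHasseArrow C V U ∧ IsBrickLabel C V U S) := by
  subst hW
  exact fun S =>
    ⟨⟨fun hS => hS.exists_hasseArrow_from_top hT hUT hwide,
      fun ⟨_, hUV, _, hHA, hL⟩ => hL.isSimpleIn_of_hasseArrow_from_top hUV hHA⟩,
    ⟨fun hS => hS.exists_hasseArrow_to_bot hU hT hUT hwide,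
      fun ⟨_, _, hVT, hHA, hL⟩ => hL.isSimpleIn_of_hasseArrow_to_bot hwide hVT hHA⟩⟩
end

section
/- Let 𝒜 be an abelian length category and [𝒰, 𝒯] a join interval in tors 𝒜, i.e., 𝒯 is the join of the set [𝒰,𝒯]⁻ consisting of 𝒰 and all 𝒱 ∈ [𝒰,𝒯] with a Hasse arrow 𝒱 → 𝒰. Let ℒ be the set of brick labels of the Hasse arrows 𝒱 → 𝒰 with 𝒱 ∈ [𝒰,𝒯]. Then 𝒰^⊥ ∩ 𝒯 = Filt ℒ. -/
open CategoryTheory CategoryTheory.Limits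

universe v u

attribute [local instance] CategoryTheory.Abelian.hasFiniteBiproducts

variable (C : Type u) [Category.{v} C] [Abelian C]

/-!
Filt ℒ ⊆ 𝒰^⊥ ∩ 𝒯 since 𝒰^⊥ ∩ 𝒯 is closed under extensions and under direct summands of finite
direct sums.

Conversely, for a single Hasse arrow 𝒱 → 𝒰 every `X ∈ 𝒰^⊥ ∩ 𝒱` is filtered by the label: a minimal
nonzero quotient `B` of `X` in 𝒰^⊥ is a brick, and the kernel of `X ↠ B` stays in 𝒱. Indeed, let
`Q` be the 𝒱-torsion-free part of that kernel and `X₁` the corresponding quotient of `X`, an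
extension of `B` by `Q`; then `X₁ ∈ 𝒰^⊥ ∩ 𝒱` is nonzero, so adjacency of 𝒰 ⊊ 𝒱 yields a nonzero map
`B → X₁`, which must split `X₁ ↠ B` because `B` is a brick; thus `Q ∈ 𝒱 ∩ 𝒱^⊥` vanishes.

For a join interval, a nonzero `Y ∈ 𝒰^⊥ ∩ 𝒯` receives a nonzero map from some 𝒱 with a Hasse arrow
𝒱 → 𝒰. The preimage in `Y` of the 𝒰-torsion part of `Y / t_𝒱 Y` is then a nonzero subobject lying
in 𝒰^⊥ ∩ 𝒱 with quotient in 𝒰^⊥ ∩ 𝒯, and noetherian induction on quotients of `Y` finishes.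
-/

section

variable {C}

lemma mem_rPerp_of_mono {U : Set C} {X Y : C} (f : X ⟶ Y) [Mono f] (hY : Y ∈ RPerp C U) :
    X ∈ RPerp C U := fun A hA g => by
  rw [← cancel_mono f, zero_comp]
  exact hY A hA (g ≫ f)

lemma mem_rPerp_of_isZero {U : Set C} {X : C} (hX : IsZero X) : X ∈ RPerp C U :=
  fun _ _ g => hX.eq_of_tgt g 0

lemma mem_rPerp_of_shortExact {U : Set C} {E : ShortComplex C} (hE : E.ShortExact)
    (h₁ : E.X₁ ∈ RPerp C U) (h₃ : E.X₃ ∈ RPerp C U) : E.X₂ ∈ RPerp C U := by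
  intro A hA f
  obtain ⟨l, hl⟩ := KernelFork.IsLimit.lift' hE.fIsKernel f (h₃ A hA (f ≫ E.g))
  rw [← hl, h₁ A hA l, zero_comp]

lemma rPerp_anti {U V : Set C} (h : U ⊆ V) : RPerp C V ⊆ RPerp C U :=
  fun _ hX A hA => hX A (h hA)

lemma isZero_of_mem_of_mem_rPerp {T : Set C} {X : C} (hX : X ∈ T) (hX' : X ∈ RPerp C T) :
    IsZero X :=
  (IsZero.iff_id_eq_zero X).2 (hX' X hX (𝟙 X))

lemma isTorsionClass_lPerp (X : Set C) : IsTorsionClass C (LPerp C X) where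
  zero_mem Z hZ _ _ f := hZ.eq_of_src f 0
  quot_mem A B f _ hA Z hZ g := by
    rw [← cancel_epi f, comp_zero]
    exact hA Z hZ (f ≫ g)
  ext_mem E hE h₁ h₃ Z hZ f := by
    obtain ⟨l, hl⟩ := CokernelCofork.IsColimit.desc' hE.gIsCokernel f (h₁ Z hZ (E.f ≫ f))
    rw [← hl, h₃ Z hZ l, comp_zero]

lemma torsClosure_subset {S T : Set C} (hT : IsTorsionClass C T) (h : S ⊆ T) :
    torsClosure C S ⊆ T :=
  fun _ hX => hX T ⟨hT, h⟩

lemma exists_hom_ne_zero_of_mem_torsClosure {S : Set C} {Y : C} (hY : Y ∈ torsClosure C S)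
    (hY₀ : ¬ IsZero Y) : ∃ A ∈ S, ∃ g : A ⟶ Y, g ≠ 0 := by
  by_contra! h
  have hSY : S ⊆ LPerp C {Y} := by
    rintro A hA _ rfl f
    exact h A hA f
  exact hY₀ ((IsZero.iff_id_eq_zero Y).2
    (torsClosure_subset (isTorsionClass_lPerp _) hSY hY Y rfl (𝟙 Y)))

lemma IsHasseArrow.exists_hom_ne_zero {U V : Set C} (hUV : IsHasseArrow C V U) {Z : C}
    (hZV : Z ∈ V) (hZU : Z ∈ RPerp C U) (hZ : ¬ IsZero Z) {Y : C} (hYV : Y ∈ V)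
    (hYU : Y ∉ U) : ∃ f : Y ⟶ Z, f ≠ 0 := by
  obtain ⟨hV, -, hUV, hadj⟩ := hUV
  have hD : IsTorsionClass C (V ∩ LPerp C {Z}) := hV.inter (isTorsionClass_lPerp _)
  rcases hadj _ hD (fun A hA => ⟨hUV.1 hA, by rintro _ rfl f; exact hZU A hA f⟩)
    Set.inter_subset_left with hDU | hDV
  · by_contra! h
    exact hYU (hDU ▸ ⟨hYV, by rintro _ rfl f; exact h f⟩)
  · rw [← hDV] at hZV
    exact absurd ((IsZero.iff_id_eq_zero Z).2 (hZV.2 Z rfl (𝟙 Z))) hZ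

end

section

variable {C}

open CategoryTheory.Abelian CategoryTheory.Abelian.Pseudoelement
open scoped Pseudoelement

lemma shortExact_kernel {X Y : C} (f : X ⟶ Y) [Epi f] :
    (ShortComplex.mk (kernel.ι f) f (kernel.condition f)).ShortExact :=
  .mk' (ShortComplex.exact_kernel f) inferInstance inferInstance

lemma isIso_kernel_ι_iff {X Y : C} (f : X ⟶ Y) [Epi f] : IsIso (kernel.ι f) ↔ IsZero Y :=
  (shortExact_kernel f).isIso_f_iff

/-- The preimage under an epimorphism `c` of the subobject `S.X₁` of `S.X₂` is an extension of
`S.X₁` by `kernel c`. -/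
lemma exists_shortExact_kernel_comp {Y : C} {S : ShortComplex C} (hS : S.ShortExact)
    (c : Y ⟶ S.X₂) [Epi c] :
    ∃ (v : kernel c ⟶ kernel (c ≫ S.g)) (u : kernel (c ≫ S.g) ⟶ S.X₁) (w : v ≫ u = 0),
      v ≫ kernel.ι (c ≫ S.g) = kernel.ι c ∧ (ShortComplex.mk v u w).ShortExact := by
  have := hS.mono_f
  obtain ⟨u, hu⟩ := KernelFork.IsLimit.lift' hS.fIsKernel (kernel.ι (c ≫ S.g) ≫ c)
    (by rw [Category.assoc, kernel.condition])
  change u ≫ S.f = kernel.ι (c ≫ S.g) ≫ c at hu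
  set v := kernel.lift (c ≫ S.g) (kernel.ι c) (by rw [kernel.condition_assoc, zero_comp])
  have hv : v ≫ kernel.ι (c ≫ S.g) = kernel.ι c := kernel.lift_ι _ _ _
  have w : v ≫ u = 0 := by
    rw [← cancel_mono S.f, Category.assoc, hu, reassoc_of% hv, kernel.condition, zero_comp]
  refine ⟨v, u, w, hv, .mk' ?_ (mono_of_mono_fac hv) ?_⟩
  · refine exact_of_pseudo_exact _ fun b (hb : u b = 0) => ?_
    obtain ⟨m, hm⟩ := pseudo_exact_of_exact (ShortComplex.exact_kernel c)
      (kernel.ι (c ≫ S.g) b) (show c _ = 0 by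
        rw [← Pseudoelement.comp_apply, ← hu, Pseudoelement.comp_apply, hb, apply_zero])
    refine ⟨m, pseudo_injective_of_mono (kernel.ι (c ≫ S.g)) ?_⟩
    change (kernel.ι (c ≫ S.g)) (v m) = _
    rw [← Pseudoelement.comp_apply, hv]
    exact hm
  · refine epi_of_pseudo_surjective _ fun a => ?_
    obtain ⟨y, hy⟩ := pseudo_surjective_of_epi c (S.f a)
    obtain ⟨k, hk⟩ := pseudo_exact_of_exact (ShortComplex.exact_kernel (c ≫ S.g)) y
      (show (c ≫ S.g) y = 0 by
        rw [Pseudoelement.comp_apply, hy, ← Pseudoelement.comp_apply, S.zero,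
          Pseudoelement.zero_apply])
    refine ⟨k, pseudo_injective_of_mono S.f ?_⟩
    change S.f (u k) = _
    rw [← hy, ← Pseudoelement.comp_apply, hu, Pseudoelement.comp_apply]
    exact congrArg c hk

/-- For subobjects `kernel ρ ⊆ kernel π ⊆ X`, the quotient `X / kernel ρ` is an extension of
`X / kernel π ≅ B` by `kernel π / kernel ρ ≅ Q`. -/
lemma exists_shortExact_cokernel_comp {X B Q : C} (π : X ⟶ B) [Epi π] (ρ : kernel π ⟶ Q)
    [Epi ρ] :
    ∃ (a : Q ⟶ cokernel (kernel.ι ρ ≫ kernel.ι π))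
      (b : cokernel (kernel.ι ρ ≫ kernel.ι π) ⟶ B) (w : a ≫ b = 0),
      (ShortComplex.mk a b w).ShortExact := by
  set κ := kernel.ι ρ ≫ kernel.ι π
  obtain ⟨a, ha⟩ := CokernelCofork.IsColimit.desc' (shortExact_kernel ρ).gIsCokernel
    (kernel.ι π ≫ cokernel.π κ) (by rw [← Category.assoc, cokernel.condition])
  change ρ ≫ a = kernel.ι π ≫ cokernel.π κ at ha
  set b := cokernel.desc κ π (by rw [Category.assoc, kernel.condition, comp_zero])
  have hb : cokernel.π κ ≫ b = π := cokernel.π_desc _ _ _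
  have w : a ≫ b = 0 := by
    rw [← cancel_epi ρ, reassoc_of% ha, hb, kernel.condition, comp_zero]
  refine ⟨a, b, w, .mk' ?_ ?_ (epi_of_epi_fac hb)⟩
  · refine exact_of_pseudo_exact _ fun y (hy : b y = 0) => ?_
    obtain ⟨x, rfl⟩ := pseudo_surjective_of_epi (cokernel.π κ) y
    obtain ⟨k, hk⟩ := pseudo_exact_of_exact (ShortComplex.exact_kernel π) x
      (show π x = 0 by rw [← hb, Pseudoelement.comp_apply, hy])
    refine ⟨ρ k, ?_⟩
    change a (ρ k) = _
    rw [← Pseudoelement.comp_apply, ha, Pseudoelement.comp_apply]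
    exact congrArg (cokernel.π κ) hk
  · refine mono_of_zero_of_map_zero _ fun q (hq : a q = 0) => ?_
    obtain ⟨k, rfl⟩ := pseudo_surjective_of_epi ρ q
    obtain ⟨s, hs⟩ := pseudo_exact_of_exact (ShortComplex.exact_cokernel κ) (kernel.ι π k)
      (show cokernel.π κ _ = 0 by rw [← Pseudoelement.comp_apply, ← ha,
        Pseudoelement.comp_apply, hq])
    have hks : kernel.ι ρ s = k := by
      apply pseudo_injective_of_mono (kernel.ι π)
      rw [← Pseudoelement.comp_apply]
      exact hs
    rw [← hks, ← Pseudoelement.comp_apply, kernel.condition, Pseudoelement.zero_apply]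

end

section

variable {C}

lemma mk_kernel_ι_lt_mk_kernel_ι_comp {X Y Z : C} (p : X ⟶ Y) [Epi p] (q : Y ⟶ Z) [Epi q]
    (hq : ¬ IsIso q) : Subobject.mk (kernel.ι p) < Subobject.mk (kernel.ι (p ≫ q)) := by
  obtain ⟨v, _, _, hv, hvu⟩ := exists_shortExact_kernel_comp (shortExact_kernel q) p
  refine Subobject.mk_lt_mk_of_comm v hv fun hv' => hq ?_
  have := Preadditive.mono_of_isZero_kernel q (hvu.isIso_f_iff.1 hv')
  exact isIso_of_mono_of_epi q

lemma induction_on_subobjects {D : Type*} [Category D] {P : D → Prop}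
    (h : ∀ X, (∀ ⦃Y⦄ (i : Y ⟶ X), Mono i → ¬ IsIso i → P Y) → P X)
    (X : D) [IsArtinianObject X] : P X := by
  suffices ∀ (S : Subobject X) ⦃Y⦄ (i : Y ⟶ X) [Mono i], Subobject.mk i = S → P Y from
    this _ (𝟙 X) rfl
  intro S
  induction S using WellFoundedLT.induction with
  | _ S ih =>
    rintro Y i _ rfl
    exact h Y fun Z j _ hj => ih _ (Subobject.mk_lt_mk_of_comm j rfl hj) (j ≫ i) rfl

lemma induction_on_quotients {P : C → Prop}
    (h : ∀ X, (∀ ⦃Y⦄ (q : X ⟶ Y), Epi q → ¬ IsIso q → P Y) → P X)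
    (X : C) [IsNoetherianObject X] : P X := by
  suffices ∀ (S : Subobject X) ⦃Y⦄ (p : X ⟶ Y) [Epi p], Subobject.mk (kernel.ι p) = S → P Y
    from this _ (𝟙 X) rfl
  intro S
  induction S using WellFoundedGT.induction with
  | _ S ih =>
    rintro Y p _ rfl
    exact h Y fun Z q _ hq => ih _ (mk_kernel_ι_lt_mk_kernel_ι_comp p q hq) (p ≫ q) rfl

lemma exists_minimal_quotient (X : C) [IsNoetherianObject X] (P : ∀ ⦃B : C⦄, (X ⟶ B) → Prop)
    {B₀ : C} (p₀ : X ⟶ B₀) [Epi p₀] (h₀ : P p₀) :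
    ∃ (B : C) (p : X ⟶ B), Epi p ∧ P p ∧
      ∀ ⦃Z : C⦄ (q : B ⟶ Z), Epi q → P (p ≫ q) → IsIso q := by
  obtain ⟨_, ⟨B, p, hp, rfl, hP⟩, hmax⟩ := (wellFounded_gt (α := Subobject X)).has_min
    {S | ∃ (B : C) (p : X ⟶ B), Epi p ∧ Subobject.mk (kernel.ι p) = S ∧ P p}
    ⟨_, B₀, p₀, inferInstance, rfl, h₀⟩
  refine ⟨B, p, hp, hP, fun Z q hq hPq => ?_⟩
  by_contra hq'
  exact hmax _ ⟨Z, p ≫ q, epi_comp p q, rfl, hPq⟩ (mk_kernel_ι_lt_mk_kernel_ι_comp p q hq')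

lemma isIso_of_mono_of_isArtinianObject {D : Type*} [Category D] {X : D} [IsArtinianObject X]
    (f : X ⟶ X) [Mono f] : IsIso f := by
  by_contra hf
  let e : End X := f
  have hmono : ∀ n : ℕ, Mono (e ^ n) := fun n => by
    induction n with
    | zero => exact inferInstanceAs (Mono (𝟙 X))
    | succ n ih => rw [pow_succ, End.mul_def]; exact mono_comp _ _
  exact not_strictAnti_of_isArtinianObject (fun n => Subobject.mk (e ^ n))
    (strictAnti_nat_of_succ_lt fun n =>
      Subobject.mk_lt_mk_of_comm f (by rw [pow_succ, End.mul_def]) hf)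

/-- `kernel p` is the torsion radical of `X` with respect to `V`. -/
lemma exists_epi_kernel_mem_rPerp {V : Set C} (hV : IsTorsionClass C V) (X : C)
    [IsNoetherianObject X] : ∃ (Q : C) (p : X ⟶ Q), Epi p ∧ kernel p ∈ V ∧ Q ∈ RPerp C V := by
  obtain ⟨Q, p, hp, hpV, hmin⟩ := exists_minimal_quotient X (fun _ p => kernel p ∈ V) (𝟙 X)
    (hV.zero_mem _ (isZero_kernel_of_mono _))
  refine ⟨Q, p, hp, hpV, fun A hA f => ?_⟩
  have hS := ShortComplex.ShortExact.mk' (ShortComplex.exact_cokernel (image.ι f))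
    inferInstance inferInstance
  obtain ⟨_, _, _, -, hvu⟩ := exists_shortExact_kernel_comp hS p
  have := hmin _ inferInstance
    (hV.ext_mem _ hvu hpV (hV.quot_mem (factorThruImage f) inferInstance hA))
  have hι : image.ι f = 0 := by
    rw [← cancel_mono (cokernel.π (image.ι f)), cokernel.condition, zero_comp]
  rw [← image.fac f, hι, comp_zero]

lemma exists_epi_isBrick [Artinian C] {U : Set C} {X : C} [IsNoetherianObject X]
    (hXU : X ∈ RPerp C U) (hX : ¬ IsZero X) :
    ∃ (B : C) (p : X ⟶ B), Epi p ∧ IsBrick C B ∧ B ∈ RPerp C U := by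
  obtain ⟨B, p, hp, ⟨hB, hBU⟩, hmin⟩ :=
    exists_minimal_quotient X (fun B _ => ¬ IsZero B ∧ B ∈ RPerp C U) (𝟙 X) ⟨hX, hXU⟩
  refine ⟨B, p, hp, ⟨hB, fun f => or_iff_not_imp_left.2 fun hf => ?_⟩, hBU⟩
  have : IsIso (factorThruImage f) := hmin _ inferInstance
    ⟨fun hI => hf (by rw [← image.fac f, hI.eq_of_src (image.ι f) 0, comp_zero]),
      mem_rPerp_of_mono (image.ι f) hBU⟩
  have : Mono f := by
    rw [← image.fac f]
    infer_instance
  exact isIso_of_mono_of_isArtinianObject f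

end

section

variable {C}

lemma mem_addClosure_of_mem {L : Set C} {X : C} (hX : X ∈ L) : X ∈ AddClosure C L :=
  ⟨1, fun _ => X, fun _ => hX, biproduct.π _ 0,
    ⟨⟨⟨biproduct.ι (fun _ : Fin 1 => X) 0, by simp⟩⟩⟩⟩

lemma addClosure_mono {L L' : Set C} (h : L ⊆ L') : AddClosure C L ⊆ AddClosure C L' :=
  fun _ ⟨n, c, hc, f, hf⟩ => ⟨n, c, fun i => h (hc i), f, hf⟩

lemma filt_mono {L L' : Set C} (h : L ⊆ L') : Filt C L ⊆ Filt C L' := by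
  intro X hX
  induction hX with
  | of_isZero X hX => exact .of_isZero X hX
  | ext E hE _ h₃ ih => exact .ext E hE ih (addClosure_mono h h₃)
  | of_iso X Y e _ ih => exact .of_iso X Y e ih

lemma filtMem_of_shortExact {L : Set C} {E : ShortComplex C} (hE : E.ShortExact)
    (h₁ : FiltMem C L E.X₁) (h₃ : FiltMem C L E.X₃) : FiltMem C L E.X₂ := by
  suffices ∀ {Z : C}, FiltMem C L Z → ∀ {X₁ X₂ : C} (f : X₁ ⟶ X₂) (g : X₂ ⟶ Z) (w : f ≫ g = 0),
      (ShortComplex.mk f g w).ShortExact → FiltMem C L X₁ → FiltMem C L X₂ from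
    this h₃ E.f E.g E.zero hE h₁
  intro Z hZ
  induction hZ with
  | of_isZero Z hZ =>
    intro X₁ X₂ f g w hfg h₁
    have := hfg.isIso_f_iff.2 hZ
    exact .of_iso _ _ (asIso f) h₁
  | ext E' hE' _ h₃ ih =>
    -- filter `X₂` by the preimage of `E'.X₁` under `g`
    intro X₁ X₂ f g w hfg h₁
    have := hfg.epi_g
    have := hE'.epi_g
    obtain ⟨v, u, w', -, hvu⟩ := exists_shortExact_kernel_comp hE' g
    have hK : FiltMem C L (kernel g) :=
      .of_iso _ _ (IsLimit.conePointUniqueUpToIso hfg.fIsKernel (limit.isLimit _)) h₁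
    exact .ext _ (shortExact_kernel (g ≫ E'.g)) (ih v u w' hvu hK) h₃
  | of_iso Z Z' e _ ih =>
    intro X₁ X₂ f g w hfg h₁
    have w' : f ≫ g ≫ e.inv = 0 := by rw [reassoc_of% w, zero_comp]
    refine ih f (g ≫ e.inv) w' ?_ h₁
    exact ShortComplex.shortExact_of_iso (ShortComplex.isoMk (S₁ := .mk f g w)
      (S₂ := .mk f (g ≫ e.inv) w') (Iso.refl _) (Iso.refl _) e.symm (by simp) (by simp)) hfg

lemma exists_shortExact_biproduct_fin_succ {n : ℕ} (c : Fin (n + 1) → C) :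
    ∃ E : ShortComplex C, E.ShortExact ∧ E.X₁ = c 0 ∧ E.X₂ = (⨁ c) ∧
      E.X₃ = (⨁ fun i : Fin n => c i.succ) := by
  have hzero : biproduct.ι c 0 ≫ biproduct.lift (fun i : Fin n => biproduct.π c i.succ) = 0 := by
    ext i
    simp [biproduct.ι_π_ne _ (Ne.symm (Fin.succ_ne_zero i))]
  refine ⟨ShortComplex.mk _ _ hzero, ?_, rfl, rfl, rfl⟩
  refine ShortComplex.Splitting.shortExact
    ⟨biproduct.π c 0, biproduct.desc fun i : Fin n => biproduct.ι c i.succ, ?_, ?_, ?_⟩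
  · simp
  · ext i j
    simp [biproduct.ι_π, Fin.succ_inj]
  · refine biproduct.hom_ext' _ _ fun j => ?_
    induction j using Fin.cases with
    | zero => simp [reassoc_of% hzero]
    | succ i =>
      have hlift : biproduct.ι c i.succ ≫
          biproduct.lift (fun i : Fin n => biproduct.π c i.succ) =
          biproduct.ι (fun i : Fin n => c i.succ) i := by
        ext j
        simp [biproduct.ι_π, Fin.succ_inj]
      simp [reassoc_of% hlift, biproduct.ι_π_ne_assoc _ (Fin.succ_ne_zero i)]

lemma biproduct_mem {P : Set C} (h₀ : ∀ Z : C, IsZero Z → Z ∈ P)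
    (hext : ∀ E : ShortComplex C, E.ShortExact → E.X₁ ∈ P → E.X₃ ∈ P → E.X₂ ∈ P) :
    ∀ {n : ℕ} (c : Fin n → C), (∀ i, c i ∈ P) → (⨁ c) ∈ P
  | 0, c, _ => h₀ _ ((IsZero.iff_id_eq_zero _).2 (biproduct.hom_ext _ _ fun j => j.elim0))
  | n + 1, c, hc => by
    obtain ⟨E, hE, h₁, h₂, h₃⟩ := exists_shortExact_biproduct_fin_succ c
    rw [← h₂]
    exact hext E hE (h₁ ▸ hc 0) (h₃ ▸ biproduct_mem h₀ hext _ fun i => hc i.succ)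

lemma filt_subset {L P : Set C} (h₀ : ∀ Z : C, IsZero Z → Z ∈ P)
    (hext : ∀ E : ShortComplex C, E.ShortExact → E.X₁ ∈ P → E.X₃ ∈ P → E.X₂ ∈ P)
    (hsplit : ∀ ⦃X Y : C⦄ (f : X ⟶ Y), IsSplitEpi f → X ∈ P → Y ∈ P) (hL : L ⊆ P) :
    Filt C L ⊆ P := by
  intro X hX
  induction hX with
  | of_isZero X hX => exact h₀ X hX
  | ext E hE _ h₃ ih =>
    obtain ⟨n, c, hc, f, hf⟩ := h₃
    exact hext E hE ih (hsplit f hf (biproduct_mem h₀ hext c fun i => hL (hc i)))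
  | of_iso X Y e _ ih => exact hsplit e.hom inferInstance ih

lemma filt_subset_rPerp_inter {L U T : Set C} (hT : IsTorsionClass C T)
    (hL : L ⊆ RPerp C U ∩ T) : Filt C L ⊆ RPerp C U ∩ T := fun _ hX =>
  ⟨filt_subset (fun _ => mem_rPerp_of_isZero) (fun _ => mem_rPerp_of_shortExact)
      (fun _ _ f _ hX => mem_rPerp_of_mono (section_ f) hX) (fun _ hS => (hL hS).1) hX,
    filt_subset hT.zero_mem hT.ext_mem (fun _ _ f _ => hT.quot_mem f inferInstance)
      (fun _ hS => (hL hS).2) hX⟩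

end

section

variable {C}

lemma IsHasseArrow.kernel_mem_of_isBrick [Noetherian C] {U V : Set C} (hUV : IsHasseArrow C V U)
    {X B : C} (hXV : X ∈ V) (π : X ⟶ B) [Epi π] (hB : IsBrick C B)
    (hBU : B ∈ RPerp C U) : kernel π ∈ V := by
  have hV := hUV.1
  obtain ⟨Q, ρ, hρ, hρV, hQV⟩ := exists_epi_kernel_mem_rPerp hV (kernel π)
  set X₁ := cokernel (kernel.ι ρ ≫ kernel.ι π)
  obtain ⟨a, b, _, hab⟩ := exists_shortExact_cokernel_comp π ρ
  have := hab.epi_g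
  have hX₁V : X₁ ∈ V := hV.quot_mem (cokernel.π _) inferInstance hXV
  have hX₁U : X₁ ∈ RPerp C U :=
    mem_rPerp_of_shortExact hab (rPerp_anti hUV.2.2.1.1 hQV) hBU
  have hBV : B ∈ V := hV.quot_mem π inferInstance hXV
  obtain ⟨f, hf⟩ := hUV.exists_hom_ne_zero hX₁V hX₁U (fun h => hB.1 (h.of_epi b)) hBV
    (fun hBU' => hB.1 (isZero_of_mem_of_mem_rPerp hBU' hBU))
  have hQ : IsZero Q := by
    rcases hB.2 (f ≫ b) with hfb | hfb
    · obtain ⟨l, hl⟩ := KernelFork.IsLimit.lift' hab.fIsKernel f hfb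
      exact absurd (by rw [← hl, hQV B hBV l, zero_comp]) hf
    · let spl := ShortComplex.Splitting.ofExactOfSection _ hab.exact (inv (f ≫ b) ≫ f)
        (by simp) hab.mono_f
      have : IsSplitEpi spl.r := ⟨⟨⟨a, spl.f_r⟩⟩⟩
      exact isZero_of_mem_of_mem_rPerp (hV.quot_mem spl.r inferInstance hX₁V) hQV
  have := (isIso_kernel_ι_iff ρ).2 hQ
  exact hV.quot_mem (kernel.ι ρ) inferInstance hρV

lemma IsHasseArrow.rPerp_inter_subset_filt [Noetherian C] [Artinian C] {U V : Set C}
    (hUV : IsHasseArrow C V U) : RPerp C U ∩ V ⊆ Filt C {S | IsBrickLabel C V U S} := by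
  intro X hX
  refine induction_on_subobjects (P := fun X => X ∈ RPerp C U ∩ V → FiltMem C _ X)
    (fun X ih ⟨hXU, hXV⟩ => ?_) X hX
  by_cases hX : IsZero X
  · exact .of_isZero X hX
  obtain ⟨B, π, hπ, hB, hBU⟩ := exists_epi_isBrick hXU hX
  have hK : kernel π ∈ RPerp C U ∩ V :=
    ⟨mem_rPerp_of_mono (kernel.ι π) hXU, hUV.kernel_mem_of_isBrick hXV π hB hBU⟩
  exact .ext _ (shortExact_kernel π)
    (ih (kernel.ι π) inferInstance (fun h => hB.1 ((isIso_kernel_ι_iff π).1 h)) hK)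
    (mem_addClosure_of_mem ⟨hB, hBU, hUV.1.quot_mem π hπ hXV⟩)

lemma exists_epi_kernel_mem_of_hom_ne_zero [Noetherian C] {U V : Set C}
    (hU : IsTorsionClass C U) (hV : IsTorsionClass C V) (hUV : U ⊆ V) {A Y : C} (hA : A ∈ V)
    (g : A ⟶ Y) (hg : g ≠ 0) :
    ∃ (Z : C) (q : Y ⟶ Z), Epi q ∧ ¬ IsIso q ∧ kernel q ∈ V ∧ Z ∈ RPerp C U := by
  obtain ⟨Q, p, hp, hpV, hQV⟩ := exists_epi_kernel_mem_rPerp hV Y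
  obtain ⟨Z, d, hd, hdU, hZU⟩ := exists_epi_kernel_mem_rPerp hU Q
  obtain ⟨_, _, _, -, hvu⟩ := exists_shortExact_kernel_comp (shortExact_kernel d) p
  refine ⟨Z, p ≫ d, epi_comp p d, fun h => hg ?_, hV.ext_mem _ hvu hpV (hUV hdU), hZU⟩
  have : Mono p := mono_of_mono p d
  rw [← cancel_mono p, hQV A hA (g ≫ p), zero_comp]

lemma rPerp_inter_subset_filt_of_join [Noetherian C] [Artinian C] {U T : Set C}
    (hU : IsTorsionClass C U) (hT : IsTorsionClass C T)
    (hjoin : T = torsClosure C (U ∪ ⋃₀ {V : Set C | V ⊆ T ∧ IsHasseArrow C V U})) :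
    RPerp C U ∩ T ⊆
      Filt C {S : C | ∃ V : Set C, V ⊆ T ∧ IsHasseArrow C V U ∧ IsBrickLabel C V U S} := by
  intro Y hY
  refine induction_on_quotients (P := fun Y => Y ∈ RPerp C U ∩ T → FiltMem C _ Y)
    (fun Y ih ⟨hYU, hYT⟩ => ?_) Y hY
  by_cases hY : IsZero Y
  · exact .of_isZero Y hY
  obtain ⟨A, hA, g, hg⟩ := exists_hom_ne_zero_of_mem_torsClosure (hjoin ▸ hYT) hY
  obtain hAU | ⟨V, ⟨hVT, hUV⟩, hAV⟩ := hA
  · exact absurd (hYU A hAU g) hg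
  obtain ⟨Z, q, hq, hq', hqV, hZU⟩ :=
    exists_epi_kernel_mem_of_hom_ne_zero hU hUV.1 hUV.2.2.1.1 hAV g hg
  refine filtMem_of_shortExact (shortExact_kernel q)
    (filt_mono ?_ (hUV.rPerp_inter_subset_filt ⟨mem_rPerp_of_mono (kernel.ι q) hYU, hqV⟩))
    (ih q hq hq' ⟨hZU, hT.quot_mem q hq hYT⟩)
  exact fun S hS => ⟨V, hVT, hUV, hS⟩

end

theorem stmt_12 [Noetherian C] [Artinian C]
    (U T : Set C) (hU : IsTorsionClass C U) (hT : IsTorsionClass C T)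
    (hjoin : T = torsClosure C
      (U ∪ ⋃₀ {V : Set C | V ⊆ T ∧ IsHasseArrow C V U})) :
    RPerp C U ∩ T =
      Filt C {S : C | ∃ V : Set C, V ⊆ T ∧ IsHasseArrow C V U ∧ IsBrickLabel C V U S} :=
  (rPerp_inter_subset_filt_of_join hU hT hjoin).antisymm <|
    filt_subset_rPerp_inter hT fun _ ⟨_, hVT, _, _, hSU, hSV⟩ => ⟨hSU, hVT hSV⟩
end

section
/- Let 𝒜 be an abelian length category, 𝒯 a torsion class, and 𝒲 a Serre subcategory of the left wide subcategory W_L(𝒯). Set 𝒰 := 𝒯 ∩ ^⊥𝒲. Then 𝒰 is a torsion class, 𝒯 = 𝒰 * 𝒲, and 𝒲 = 𝒰^⊥ ∩ 𝒯. -/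
open CategoryTheory CategoryTheory.Limits

universe v u

attribute [local instance] CategoryTheory.Abelian.hasFiniteBiproducts

variable (C : Type u) [Category.{v} C] [Abelian C]

/-!
Let `X ∈ T`. Since the category is artinian, `X` has a minimal subobject `P` with `X / P ∈ W`.
Then `P ∈ T` because `X / P ∈ W_L(T)`, and `P ∈ ^⊥W`: for a nonzero `g : P ⟶ W₀` with
`W₀ ∈ W`, the image `P / ker g` lies in `T` and embeds in `W₀`, hence lies in the Serre
subcategory `W`; so `X / ker g`, an extension of `X / P` by `P / ker g`, lies in `W` too,
contradicting minimality since `ker g ⊊ P`. This gives `T ⊆ U * W`. If moreover `X ∈ U^⊥`,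
then `P ⟶ X` vanishes, so `X ≅ X / P ∈ W`.
-/

namespace CategoryTheory.ShortComplex

variable {C : Type u} [Category.{v} C] [Abelian C]

lemma shortExact_cokernelMap_comp {X Y Z : C} (f : X ⟶ Y) (g : Y ⟶ Z) [Mono g] :
    (ShortComplex.mk (cokernel.map f (f ≫ g) (𝟙 _) g (by simp))
      (cokernel.map (f ≫ g) g f (𝟙 _) (by simp)) (by ext; simp)).ShortExact := by
  let S := kernelCokernelCompSequence.snakeInput f g
  have hδ : S.L₂'.f = 0 := (isZero_kernel_of_mono g).eq_of_src _ _
  exact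
    { exact := S.L₃_exact
      mono_f := S.L₂'_exact.mono_g hδ
      epi_g := epi_of_epi_fac (f := cokernel.π (f ≫ g)) (h := cokernel.π g) (by simp) }

end CategoryTheory.ShortComplex

section

variable {C : Type u} [Category.{v} C] [Abelian C] {T W : Set C}

namespace IsTorsionClass

lemma mem_of_iso_s15 (hT : IsTorsionClass C T) {X Y : C} (e : X ≅ Y) (hX : X ∈ T) : Y ∈ T :=
  hT.quot_mem e.hom inferInstance hX

lemma inter_lPerp (hT : IsTorsionClass C T) (W : Set C) : IsTorsionClass C (T ∩ LPerp C W) where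
  zero_mem Z hZ := ⟨hT.zero_mem Z hZ, fun _ _ f => hZ.eq_of_src f 0⟩
  quot_mem A B f hf hA := ⟨hT.quot_mem f hf hA.1, fun W₀ hW₀ g => by
    rw [← cancel_epi f, comp_zero]
    exact hA.2 W₀ hW₀ (f ≫ g)⟩
  ext_mem E hE h₁ h₃ := ⟨hT.ext_mem E hE h₁.1 h₃.1, fun W₀ hW₀ g => by
    obtain ⟨φ, hφ⟩ :=
      CokernelCofork.IsColimit.desc' hE.gIsCokernel g (h₁.2 W₀ hW₀ (E.f ≫ g))
    rw [← hφ, h₃.2 W₀ hW₀ φ, comp_zero]⟩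

lemma extStar_subset (hT : IsTorsionClass C T) {U : Set C} (hU : U ⊆ T) (hW : W ⊆ T) :
    ExtStar C U W ⊆ T :=
  fun _ ⟨E, hE, h₁, h₃, ⟨e⟩⟩ => hT.mem_of_iso_s15 e (hT.ext_mem E hE (hU h₁) (hW h₃))

lemma mem_WL_of_mono (hT : IsTorsionClass C T) {A X : C} (f : A ⟶ X) [Mono f] (hA : A ∈ T)
    (hX : X ∈ WL C T) : A ∈ WL C T :=
  ⟨hA, fun _ g hY => hT.mem_of_iso_s15 (kernelCompMono g f) (hX.2 (g ≫ f) hY)⟩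

lemma mem_WL_of_iso (hT : IsTorsionClass C T) {X Y : C} (e : X ≅ Y) (hX : X ∈ WL C T) :
    Y ∈ WL C T :=
  hT.mem_WL_of_mono e.inv (hT.mem_of_iso_s15 e hX.1) hX

lemma mem_WL_of_shortExact (hT : IsTorsionClass C T) {E : ShortComplex C} (hE : E.ShortExact)
    (h₁ : E.X₁ ∈ WL C T) (h₃ : E.X₃ ∈ WL C T) : E.X₂ ∈ WL C T := by
  refine ⟨hT.ext_mem E hE h₁.1 h₃.1, fun Y g hY => ?_⟩
  -- `ker g` is the kernel of the induced map `ker (g ≫ E.g) ⟶ ker E.g ≅ X₁`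
  let S := kernelCokernelCompSequence.snakeInput g E.g
  have hker : kernel E.g ∈ WL C T :=
    hT.mem_WL_of_iso (IsLimit.conePointUniqueUpToIso hE.fIsKernel (limit.isLimit _)) h₁
  have : Mono S.L₀.f := by
    change Mono (kernel.map g (g ≫ E.g) (𝟙 _) E.g (by simp))
    infer_instance
  let e : kernel S.L₀.g ≅ S.L₀.X₁ :=
    IsLimit.conePointUniqueUpToIso (kernelIsKernel _) S.L₀_exact.fIsKernel
  exact hT.mem_of_iso_s15 e (hker.2 S.L₀.g (h₃.2 (g ≫ E.g) hY))

lemma mem_of_cokernel_mem_WL (hT : IsTorsionClass C T) {P X : C} (i : P ⟶ X) [Mono i]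
    (hX : X ∈ T) (hi : cokernel i ∈ WL C T) : P ∈ T :=
  let e : kernel (cokernel.π i) ≅ P := IsLimit.conePointUniqueUpToIso (kernelIsKernel _)
    (Abelian.monoIsKernelOfCokernel _ (cokernelIsCokernel i))
  hT.mem_of_iso_s15 e (hi.2 (cokernel.π i) hX)

end IsTorsionClass

namespace IsSerreIn

lemma mem_of_iso_s15 (hW : IsSerreIn C (WL C T) W) (hT : IsTorsionClass C T) {X Y : C}
    (e : X ≅ Y) (hX : X ∈ W) : Y ∈ W :=
  hW.quot_mem e.hom inferInstance (hT.mem_WL_of_iso e (hW.subset hX)) hX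

lemma mem_of_mono (hW : IsSerreIn C (WL C T) W) (hT : IsTorsionClass C T) {A X : C}
    (f : A ⟶ X) [Mono f] (hA : A ∈ T) (hX : X ∈ W) : A ∈ W :=
  hW.sub_mem f inferInstance (hT.mem_WL_of_mono f hA (hW.subset hX)) hX

lemma mem_of_shortExact (hW : IsSerreIn C (WL C T) W) (hT : IsTorsionClass C T)
    {E : ShortComplex C} (hE : E.ShortExact) (h₁ : E.X₁ ∈ W) (h₃ : E.X₃ ∈ W) :
    E.X₂ ∈ W :=
  hW.ext_mem E hE (hT.mem_WL_of_shortExact hE (hW.subset h₁) (hW.subset h₃)) h₁ h₃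

lemma cokernel_kernel_ι_comp_mem (hW : IsSerreIn C (WL C T) W) (hT : IsTorsionClass C T)
    {P X W₀ : C} (i : P ⟶ X) [Mono i] (hP : P ∈ T) (hi : cokernel i ∈ W) (g : P ⟶ W₀)
    (hW₀ : W₀ ∈ W) : cokernel (kernel.ι g ≫ i) ∈ W :=
  have hcoim : Abelian.coimage g ∈ W :=
    hW.mem_of_mono hT (Abelian.factorThruCoimage g)
      (hT.quot_mem (Abelian.coimage.π g) inferInstance hP) hW₀
  hW.mem_of_shortExact hT (ShortComplex.shortExact_cokernelMap_comp (kernel.ι g) i) hcoim hi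

lemma subset_extStar [Artinian C] (hW : IsSerreIn C (WL C T) W) (hT : IsTorsionClass C T) :
    T ⊆ ExtStar C (T ∩ LPerp C W) W := by
  intro X hX
  obtain ⟨P, hPW, hPmin⟩ := wellFounded_lt.has_min {P : Subobject X | cokernel P.arrow ∈ W}
    ⟨⊤, hW.zero_mem _ (isZero_cokernel_of_epi _)⟩
  have hPT : (P : C) ∈ T := hT.mem_of_cokernel_mem_WL P.arrow hX (hW.subset hPW)
  refine ⟨ShortComplex.mk P.arrow (cokernel.π P.arrow) (cokernel.condition _),
    ⟨ShortComplex.exact_of_g_is_cokernel _ (cokernelIsCokernel _)⟩,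
    ⟨hPT, fun W₀ hW₀ (g : (P : C) ⟶ W₀) => ?_⟩, hPW, ⟨Iso.refl X⟩⟩
  by_contra hg
  have hg' : ¬ IsIso (kernel.ι g) := fun _ => hg <| by
    rw [← cancel_epi (kernel.ι g), kernel.condition, comp_zero]
  have hlt := Subobject.mk_lt_mk_of_comm (i₂ := P.arrow) _ rfl hg'
  rw [Subobject.mk_arrow] at hlt
  let e : cokernel (kernel.ι g ≫ P.arrow) ≅
      cokernel (Subobject.mk (kernel.ι g ≫ P.arrow)).arrow :=
    (cokernelEpiComp _ _).symm ≪≫ cokernelIsoOfEq (Subobject.underlyingIso_hom_comp_eq_mk _)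
  exact hPmin _ (hW.mem_of_iso_s15 hT e (hW.cokernel_kernel_ι_comp_mem hT P.arrow hPT hPW g hW₀)) hlt

lemma rPerp_inter_subset [Artinian C] (hW : IsSerreIn C (WL C T) W)
    (hT : IsTorsionClass C T) : RPerp C (T ∩ LPerp C W) ∩ T ⊆ W := by
  rintro X ⟨hXperp, hXT⟩
  obtain ⟨E, hE, h₁, h₃, ⟨e⟩⟩ := hW.subset_extStar hT hXT
  have hf : E.f = 0 := by
    rw [← cancel_mono e.hom, zero_comp]
    exact hXperp _ h₁ _
  have := hE.exact.mono_g hf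
  have := hE.epi_g
  have := isIso_of_mono_of_epi E.g
  exact hW.mem_of_iso_s15 hT ((asIso E.g).symm ≪≫ e) h₃

end IsSerreIn

end

theorem stmt_15 [Artinian C]
    (T : Set C) (hT : IsTorsionClass C T)
    (W : Set C) (hW : IsSerreIn C (WL C T) W)
    (U : Set C) (hU : U = T ∩ LPerp C W) :
    IsTorsionClass C U ∧ T = ExtStar C U W ∧ W = RPerp C U ∩ T := by
  subst hU
  refine ⟨hT.inter_lPerp W, ?_, ?_⟩
  · exact (hW.subset_extStar hT).antisymm
      (hT.extStar_subset Set.inter_subset_left fun _ hX => (hW.subset hX).1)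
  · exact Set.Subset.antisymm (fun X hX => ⟨fun _ hA f => hA.2 X hX f, (hW.subset hX).1⟩)
      (hW.rPerp_inter_subset hT)
end
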